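/- arXiv:1409.4258 — 3 statements merged into one kernel-verified Lean document; each statement's English description precedes it below -/
import Mathlib

section
/- Let μ₁, μ₂, μ₃ be real numbers with μ₁ irrational, and let 0 < η < 1/4. Then for all sufficiently large real numbers N, the Lebesgue measure of Z(N) is strictly greater than N/2. -/
/-!
If `τ ≤ N` lies within `η < 1` of `F(x)` with all `xᵢ > μᵢ`, then `F(x) ≤ N + 1`, so every
`xᵢ - μᵢ` is at most `c = (N + 1)^{1/3}`. The at most `(c + 1)³` such integer points give
intervals of total length at most `2η (c + 1)³ ~ 2η N < N / 2`, and the rest of `[0, N]` lies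
in `Z(N)`.
-/

open MeasureTheory Filter Set Topology
open scoped Finset

section IntBox

variable {ι : Type*} [DecidableEq ι] [Fintype ι]

noncomputable def intBox (a : ι → ℝ) (c : ℝ) : Finset (ι → ℤ) :=
  Fintype.piFinset fun i => Finset.Ioc ⌊a i⌋ ⌊a i + c⌋

theorem mem_intBox {a : ι → ℝ} {c : ℝ} {x : ι → ℤ} :
    x ∈ intBox a c ↔ ∀ i, a i < x i ∧ (x i : ℝ) ≤ a i + c := by
  simp only [intBox, Fintype.mem_piFinset, Finset.mem_Ioc, Int.floor_lt, Int.le_floor]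

theorem card_Ioc_floor_floor_le (a : ℝ) {c : ℝ} (hc : 0 ≤ c + 1) :
    ((Finset.Ioc ⌊a⌋ ⌊a + c⌋).card : ℝ) ≤ c + 1 := by
  rw [Int.card_Ioc, ← Int.cast_natCast, Int.toNat_eq_max, Int.cast_max, Int.cast_zero]
  refine max_le ?_ hc
  push_cast
  linarith [Int.floor_le (a + c), Int.sub_one_lt_floor a]

theorem card_intBox_le (a : ι → ℝ) {c : ℝ} (hc : 0 ≤ c + 1) :
    ((intBox a c).card : ℝ) ≤ (c + 1) ^ Fintype.card ι := by
  rw [intBox, Fintype.card_piFinset, Nat.cast_prod, ← Finset.card_univ, ← Finset.prod_const]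
  exact Finset.prod_le_prod (fun _ _ => Nat.cast_nonneg _)
    fun i _ => card_Ioc_floor_floor_le (a i) hc

theorem mem_intBox_of_sum_pow_le {a : ι → ℝ} {c : ℝ} {x : ι → ℤ} {n : ℕ} (hn : n ≠ 0)
    (hc : 0 ≤ c) (hx : ∀ i, a i < x i) (hsum : ∑ i, ((x i : ℝ) - a i) ^ n ≤ c ^ n) :
    x ∈ intBox a c := by
  have hpos : ∀ i, 0 ≤ (x i : ℝ) - a i := fun i => sub_nonneg.2 (hx i).le
  refine mem_intBox.2 fun i => ⟨hx i, ?_⟩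
  have hpow : ((x i : ℝ) - a i) ^ n ≤ c ^ n :=
    (Finset.single_le_sum (fun j _ => pow_nonneg (hpos j) n) (Finset.mem_univ i)).trans hsum
  linarith [le_of_pow_le_pow_left₀ hn hc hpow]

end IntBox

theorem sub_card_mul_le_volume_real_Icc_diff_biUnion_Ioo {ι : Type*} (S : Finset ι) (p : ι → ℝ)
    (a b : ℝ) {η : ℝ} (hη : 0 ≤ η) :
    b - a - #S * (2 * η) ≤ volume.real (Icc a b \ ⋃ i ∈ S, Ioo (p i - η) (p i + η)) := by
  have hU : volume.real (⋃ i ∈ S, Ioo (p i - η) (p i + η)) ≤ #S * (2 * η) :=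
    calc volume.real (⋃ i ∈ S, Ioo (p i - η) (p i + η))
        ≤ ∑ i ∈ S, volume.real (Ioo (p i - η) (p i + η)) := measureReal_biUnion_finset_le _ _
      _ = ∑ _i ∈ S, 2 * η := Finset.sum_congr rfl fun i _ => by
        rw [Real.volume_real_Ioo_of_le (by linarith)]
        ring
      _ = #S * (2 * η) := by rw [Finset.sum_const, nsmul_eq_mul]
  have hIcc : b - a ≤ volume.real (Icc a b) := Real.volume_real_Icc ▸ le_max_left _ _
  have hUfin : volume (⋃ i ∈ S, Ioo (p i - η) (p i + η)) ≠ ⊤ :=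
    (measure_biUnion_lt_top S.finite_toSet fun _ _ => measure_Ioo_lt_top).ne
  linarith [le_measureReal_sdiff (s₁ := Icc a b) hUfin]

theorem eventually_mul_add_one_pow_three_lt {a : ℝ} (ha : a < 1) :
    ∀ᶠ c : ℝ in atTop, a * (c + 1) ^ 3 < c ^ 3 - 1 := by
  have hlim : Tendsto (fun c : ℝ => a * (1 + c⁻¹) ^ 3 + c⁻¹ ^ 3) atTop (𝓝 a) := by
    simpa using ((tendsto_inv_atTop_zero.const_add 1).pow 3).const_mul a
      |>.add (tendsto_inv_atTop_zero.pow 3)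
  filter_upwards [hlim.eventually_lt_const ha, eventually_gt_atTop 0] with c hlt hc
  have hscale : c ^ 3 * (a * (1 + c⁻¹) ^ 3 + c⁻¹ ^ 3) = a * (c + 1) ^ 3 + 1 := by
    field_simp
  nlinarith [pow_pos hc 3]

theorem rpow_inv_three_pow_three {x : ℝ} (hx : 0 ≤ x) : (x ^ (3⁻¹ : ℝ)) ^ 3 = x := by
  simpa using Real.rpow_inv_natCast_pow hx three_ne_zero

theorem eventually_mul_cbrt_add_one_pow_three_lt {a : ℝ} (ha : a < 1) :
    ∀ᶠ N : ℝ in atTop, a * ((N + 1) ^ (3⁻¹ : ℝ) + 1) ^ 3 < N := by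
  have hcbrt : Tendsto (fun N : ℝ => (N + 1) ^ (3⁻¹ : ℝ)) atTop atTop :=
    (tendsto_rpow_atTop (by norm_num)).comp (tendsto_atTop_add_const_right _ 1 tendsto_id)
  filter_upwards [hcbrt.eventually (eventually_mul_add_one_pow_three_lt ha),
    eventually_ge_atTop (-1)] with N hN hN1
  linarith [rpow_inv_three_pow_three (by linarith : 0 ≤ N + 1)]

theorem sums_of_shifted_cubes_lower_density_general
    (μ : Fin 3 → ℝ)
    (η : ℝ) (hη0 : 0 < η) (hη : η < 1/4) :
    ∃ N₀ : ℝ, ∀ N : ℝ, N₀ ≤ N →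
      N / 2 < (volume {τ : ℝ | τ ∈ Set.Icc (0 : ℝ) N ∧
        ¬ ∃ x : Fin 3 → ℤ, (∀ i, μ i < (x i : ℝ)) ∧
          |(∑ i, ((x i : ℝ) - μ i) ^ 3) - τ| < η}).toReal := by
  obtain ⟨N₀, hN₀⟩ := eventually_atTop.1 <|
    (eventually_mul_cbrt_add_one_pow_three_lt (a := 4 * η) (by linarith)).and
      (eventually_ge_atTop 0)
  refine ⟨N₀, fun N hN => ?_⟩
  obtain ⟨hlarge, hN0⟩ := hN₀ N hN
  set c := (N + 1) ^ (3⁻¹ : ℝ)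
  have hc : 0 ≤ c := by positivity
  have hc3 : c ^ 3 = N + 1 := rpow_inv_three_pow_three (by linarith)
  set Z := {τ : ℝ | τ ∈ Set.Icc (0 : ℝ) N ∧
    ¬ ∃ x : Fin 3 → ℤ, (∀ i, μ i < (x i : ℝ)) ∧ |(∑ i, ((x i : ℝ) - μ i) ^ 3) - τ| < η}
  set U := ⋃ x ∈ intBox μ c,
    Ioo (∑ i, ((x i : ℝ) - μ i) ^ 3 - η) (∑ i, ((x i : ℝ) - μ i) ^ 3 + η)
  have hZ : Icc 0 N \ U ⊆ Z := by
    rintro τ ⟨hτ, hτU⟩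
    refine ⟨hτ, fun ⟨x, hx, hclose⟩ => hτU ?_⟩
    rw [abs_sub_lt_iff] at hclose
    have hbox : x ∈ intBox μ c :=
      mem_intBox_of_sum_pow_le three_ne_zero hc hx (by linarith [hτ.2])
    exact mem_biUnion hbox ⟨by linarith, by linarith⟩
  have hZfin : volume Z ≠ ⊤ :=
    ((measure_mono fun _ hτ => hτ.1).trans_lt measure_Icc_lt_top).ne
  have hcard : ((intBox μ c).card : ℝ) ≤ (c + 1) ^ 3 := by
    simpa using card_intBox_le μ (c := c) (by linarith)
  calc N / 2 < N - (c + 1) ^ 3 * (2 * η) := by linarith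
    _ ≤ N - #(intBox μ c) * (2 * η) := by gcongr
    _ ≤ volume.real (Icc 0 N \ U) := by
      simpa using sub_card_mul_le_volume_real_Icc_diff_biUnion_Ioo (intBox μ c)
        (fun x => ∑ i, ((x i : ℝ) - μ i) ^ 3) 0 N hη0.le
    _ ≤ volume.real Z := measureReal_mono hZ hZfin

/-- **Unrepresentation for three shifted cubes.**
If `μ₁` is irrational and `0 < η < 1/4`, then for all sufficiently large `N`
the set `Z(N)` of `τ ∈ [0, N]` not approximable within `η` by
`F(x) = (x₁-μ₁)³ + (x₂-μ₂)³ + (x₃-μ₃)³` with integers `xᵢ > μᵢ` has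
Lebesgue measure greater than `N/2`. -/
theorem sums_of_shifted_cubes_lower_density
    (μ : Fin 3 → ℝ) (hμ : Irrational (μ 0))
    (η : ℝ) (hη0 : 0 < η) (hη : η < 1/4) :
    ∃ N₀ : ℝ, ∀ N : ℝ, N₀ ≤ N →
      N / 2 < (volume {τ : ℝ | τ ∈ Set.Icc (0 : ℝ) N ∧
        ¬ ∃ x : Fin 3 → ℤ, (∀ i, μ i < (x i : ℝ)) ∧
          |(∑ i, ((x i : ℝ) - μ i) ^ 3) - τ| < η}).toReal :=
  sums_of_shifted_cubes_lower_density_general μ η hη0 hη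
end

section
/- Let η > 0 and let μ₁, μ₂, μ₃ be real numbers. For τ > 0 let N(τ) denote the number of x ∈ ℤ³ with xᵢ > μᵢ for all i and |F(x) − τ| < η. Then for all sufficiently large real numbers N, one has ∫₀^N N(τ) dτ ≤ 2η (N + 10 N^{2/3}) · meas{ γ ∈ (0, ∞)³ : γ₁³ + γ₂³ + γ₃³ < 1 }, where meas denotes Lebesgue measure on ℝ³. -/
open MeasureTheory
open scoped ENNReal Pointwise

private lemma card_le_tsum_indicator {α : Type*} (s : Set α) :
    (Nat.card s : ℝ≥0∞) ≤ ∑' x : α, s.indicator 1 x := by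
  rw [← tsum_subtype]
  rcases s.finite_or_infinite with h | h
  · haveI := h.fintype
    rw [tsum_fintype, Nat.card_eq_fintype_card]
    simp
  · haveI := h.to_subtype
    rw [Nat.card_eq_zero_of_infinite]
    simp

private lemma real_rpow_add_le {a b p : ℝ} (ha : 0 ≤ a) (hb : 0 ≤ b)
    (hp : 0 ≤ p) (hp1 : p ≤ 1) : (a + b) ^ p ≤ a ^ p + b ^ p := by
  have h := NNReal.rpow_add_le_add_rpow a.toNNReal b.toNNReal hp hp1
  have h2 := NNReal.coe_le_coe.2 h
  push_cast at h2
  rwa [Real.coe_toNNReal a ha, Real.coe_toNNReal b hb] at h2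

/-- **Averaged count for three shifted cubes (§5).**
For `τ > 0` let `N(τ)` count the `x ∈ ℤ³` with `xᵢ > μᵢ` and `|F(x) - τ| < η`,
where `F(x) = ∑ᵢ (xᵢ - μᵢ)³`. Then for all sufficiently large `N`,
`∫₀^N N(τ) dτ ≤ 2η (N + 10 N^{2/3}) · meas{γ ∈ (0,∞)³ : γ₁³ + γ₂³ + γ₃³ < 1}`. -/
theorem averaged_count_three_shifted_cubes
    (η : ℝ) (hη : 0 < η) (μ : Fin 3 → ℝ) :
    ∃ N₀ : ℝ, ∀ N : ℝ, N₀ ≤ N →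
      (∫⁻ τ in Set.Icc (0 : ℝ) N,
        (Nat.card {x : Fin 3 → ℤ // (∀ i, μ i < (x i : ℝ)) ∧
          |(∑ i, ((x i : ℝ) - μ i) ^ 3) - τ| < η} : ℝ≥0∞))
      ≤ ENNReal.ofReal (2 * η * (N + 10 * N ^ ((2:ℝ)/3))) *
          volume {γ : Fin 3 → ℝ | (∀ i, 0 < γ i) ∧ (∑ i, γ i ^ 3) < 1} := by
  classical
  set S : Set (Fin 3 → ℝ) := {γ : Fin 3 → ℝ | (∀ i, 0 < γ i) ∧ (∑ i, γ i ^ 3) < 1} with hSdef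
  set V : ℝ≥0∞ := volume S with hVdef
  set D : ℝ := η + 9 * η ^ ((2:ℝ)/3) + 9 * η ^ ((1:ℝ)/3) + 3 with hDdef
  have hD0 : 0 < D := by
    have h1 : 0 ≤ η ^ ((2:ℝ)/3) := Real.rpow_nonneg hη.le _
    have h2 : 0 ≤ η ^ ((1:ℝ)/3) := Real.rpow_nonneg hη.le _
    simp only [hDdef]; nlinarith
  refine ⟨max 1 ((9 + D) ^ 3), fun N hN => ?_⟩
  have hN1 : (1:ℝ) ≤ N := le_trans (le_max_left _ _) hN
  have hN0 : (0:ℝ) < N := by linarith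
  have hND : (9 + D) ^ 3 ≤ N := le_trans (le_max_right _ _) hN
  set M : ℝ := N + η with hMdef
  have hM0 : 0 < M := by positivity
  set R : ℝ := M ^ ((1:ℝ)/3) with hRdef
  have hR0 : 0 ≤ R := Real.rpow_nonneg hM0.le _
  have hR3 : R ^ 3 = M := by
    rw [hRdef, ← Real.rpow_natCast (M ^ ((1:ℝ)/3)) 3, ← Real.rpow_mul hM0.le]
    norm_num
  set M'' : ℝ := M + 9 * R ^ 2 + 9 * R + 3 with hM''def
  have hM''0 : 0 < M'' := by positivity
  -- the final numeric inequality
  have hfinal : M'' ≤ N + 10 * N ^ ((2:ℝ)/3) := by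
    have hR2 : R ^ 2 = M ^ ((2:ℝ)/3) := by
      rw [hRdef, ← Real.rpow_natCast (M ^ ((1:ℝ)/3)) 2, ← Real.rpow_mul hM0.le]
      norm_num
    have hsub2 : M ^ ((2:ℝ)/3) ≤ N ^ ((2:ℝ)/3) + η ^ ((2:ℝ)/3) :=
      real_rpow_add_le hN0.le hη.le (by norm_num) (by norm_num)
    have hsub1 : M ^ ((1:ℝ)/3) ≤ N ^ ((1:ℝ)/3) + η ^ ((1:ℝ)/3) :=
      real_rpow_add_le hN0.le hη.le (by norm_num) (by norm_num)
    have hone : (1:ℝ) ≤ N ^ ((1:ℝ)/3) := by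
      have := Real.rpow_le_rpow (by norm_num) hN1 (by norm_num : (0:ℝ) ≤ 1/3)
      rwa [Real.one_rpow] at this
    have hcube : 9 + D ≤ N ^ ((1:ℝ)/3) := by
      have h := Real.rpow_le_rpow (by positivity) hND (by norm_num : (0:ℝ) ≤ 1/3)
      rwa [← Real.rpow_natCast (9 + D) 3, ← Real.rpow_mul (by positivity),
        (by norm_num : ((3:ℕ):ℝ) * (1/3) = 1), Real.rpow_one] at h
    have hmul : N ^ ((1:ℝ)/3) * N ^ ((1:ℝ)/3) = N ^ ((2:ℝ)/3) := by
      rw [← Real.rpow_add hN0]; norm_num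
    have key : (9 + D) * N ^ ((1:ℝ)/3) ≤ N ^ ((2:ℝ)/3) := by
      calc (9 + D) * N ^ ((1:ℝ)/3) ≤ N ^ ((1:ℝ)/3) * N ^ ((1:ℝ)/3) :=
            mul_le_mul_of_nonneg_right hcube (by positivity)
        _ = N ^ ((2:ℝ)/3) := hmul
    have hD' : D ≤ D * N ^ ((1:ℝ)/3) := le_mul_of_one_le_right hD0.le hone
    simp only [hM''def, hMdef, hR2, hDdef] at *
    nlinarith [hsub2, hsub1, key, hD', hone]
  -- sets
  set A : Set (Fin 3 → ℤ) :=
    {x : Fin 3 → ℤ | (∀ i, μ i < (x i : ℝ)) ∧ (∑ i, ((x i : ℝ) - μ i) ^ 3) < M} with hAdef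
  set T : (Fin 3 → ℤ) → Set ℝ := fun x =>
    {τ : ℝ | (∀ i, μ i < (x i : ℝ)) ∧ |(∑ i, ((x i : ℝ) - μ i) ^ 3) - τ| < η} with hTdef
  have hT : ∀ x, T x = if (∀ i, μ i < (x i : ℝ)) then
      Set.Ioo ((∑ i, ((x i : ℝ) - μ i) ^ 3) - η) ((∑ i, ((x i : ℝ) - μ i) ^ 3) + η)
      else ∅ := by
    intro x
    split_ifs with h
    · ext τ
      simp only [hTdef, Set.mem_setOf_eq, Set.mem_Ioo, abs_lt]
      constructor
      · rintro ⟨-, h1, h2⟩; exact ⟨by linarith, by linarith⟩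
      · rintro ⟨h1, h2⟩; exact ⟨h, by linarith, by linarith⟩
    · ext τ
      simp only [hTdef, Set.mem_setOf_eq, Set.mem_empty_iff_false, iff_false, not_and]
      exact fun h' => absurd h' h
  have hTmeas : ∀ x, MeasurableSet (T x) := by
    intro x; rw [hT x]; split_ifs
    · exact measurableSet_Ioo
    · exact MeasurableSet.empty
  set cube : (Fin 3 → ℤ) → Set (Fin 3 → ℝ) := fun x =>
    Set.univ.pi fun i => Set.Ico ((x i : ℝ)) ((x i : ℝ) + 1) with hcubedef
  have hcubemeas : ∀ x, MeasurableSet (cube x) :=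
    fun x => MeasurableSet.univ_pi fun i => measurableSet_Ico
  have hcubevol : ∀ x, volume (cube x) = 1 := by
    intro x
    rw [hcubedef]
    simp [volume_pi_pi, Real.volume_Ico]
  -- step 1-3 : bound the integral by 2η * #A
  have step1 : (∫⁻ τ in Set.Icc (0 : ℝ) N,
        (Nat.card {x : Fin 3 → ℤ // (∀ i, μ i < (x i : ℝ)) ∧
          |(∑ i, ((x i : ℝ) - μ i) ^ 3) - τ| < η} : ℝ≥0∞))
      ≤ ENNReal.ofReal (2*η) * ∑' x : A, (1:ℝ≥0∞) := by
    have hpt : ∀ τ : ℝ, (Nat.card {x : Fin 3 → ℤ // (∀ i, μ i < (x i : ℝ)) ∧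
          |(∑ i, ((x i : ℝ) - μ i) ^ 3) - τ| < η} : ℝ≥0∞)
        ≤ ∑' x : Fin 3 → ℤ, (T x).indicator 1 τ := by
      intro τ
      refine le_trans (card_le_tsum_indicator
        {x : Fin 3 → ℤ | (∀ i, μ i < (x i : ℝ)) ∧
          |(∑ i, ((x i : ℝ) - μ i) ^ 3) - τ| < η}) (le_of_eq (tsum_congr fun x => ?_))
      simp only [Set.indicator_apply, Set.mem_setOf_eq, hTdef, Pi.one_apply]
    have hterm : ∀ x : Fin 3 → ℤ,
        (∫⁻ τ in Set.Icc (0 : ℝ) N, (T x).indicator 1 τ)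
          ≤ ENNReal.ofReal (2*η) * A.indicator 1 x := by
      intro x
      rw [lintegral_indicator_one (hTmeas x), Measure.restrict_apply (hTmeas x)]
      by_cases hx : x ∈ A
      · have : A.indicator (1 : (Fin 3 → ℤ) → ℝ≥0∞) x = 1 := by
          simp [Set.indicator_apply, hx]
        rw [this, mul_one, hT x, if_pos hx.1]
        refine le_trans (measure_mono Set.inter_subset_left) ?_
        rw [Real.volume_Ioo]
        exact ENNReal.ofReal_le_ofReal (by linarith)
      · have hempty : T x ∩ Set.Icc (0:ℝ) N = ∅ := by
          rw [hT x]
          split_ifs with h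
          · ext τ
            simp only [Set.mem_inter_iff, Set.mem_Ioo, Set.mem_Icc,
              Set.mem_empty_iff_false, iff_false, not_and]
            intro h1 h2 h3
            exfalso
            have hge : M ≤ (∑ i, ((x i : ℝ) - μ i) ^ 3) := by
              by_contra hlt
              exact hx ⟨h, by linarith⟩
            linarith [h1.1, h1.2]
          · simp
        rw [hempty]
        simp
    calc (∫⁻ τ in Set.Icc (0 : ℝ) N,
        (Nat.card {x : Fin 3 → ℤ // (∀ i, μ i < (x i : ℝ)) ∧
          |(∑ i, ((x i : ℝ) - μ i) ^ 3) - τ| < η} : ℝ≥0∞))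
        ≤ ∫⁻ τ in Set.Icc (0 : ℝ) N, ∑' x : Fin 3 → ℤ, (T x).indicator 1 τ :=
          lintegral_mono hpt
      _ = ∑' x : Fin 3 → ℤ, ∫⁻ τ in Set.Icc (0 : ℝ) N, (T x).indicator 1 τ :=
          lintegral_tsum fun x => ((measurable_const.indicator (hTmeas x)).aemeasurable)
      _ ≤ ∑' x : Fin 3 → ℤ, ENNReal.ofReal (2*η) * A.indicator 1 x :=
          ENNReal.tsum_le_tsum hterm
      _ = ENNReal.ofReal (2*η) * ∑' x : Fin 3 → ℤ, A.indicator 1 x := ENNReal.tsum_mul_left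
      _ = ENNReal.ofReal (2*η) * ∑' x : A, (1:ℝ≥0∞) := by
          rw [← tsum_subtype A (1 : (Fin 3 → ℤ) → ℝ≥0∞)]
          rfl
  -- step 4 : #A ≤ volume B
  set B : Set (Fin 3 → ℝ) :=
    {y : Fin 3 → ℝ | (∀ i, μ i < y i) ∧ (∑ i, (y i - μ i) ^ 3) < M''} with hBdef
  have hdisj : Pairwise (Function.onFun Disjoint fun x : A => cube x) := by
    intro a b hab
    have hne : (a : Fin 3 → ℤ) ≠ b := fun h => hab (Subtype.ext h)
    obtain ⟨i, hi⟩ := Function.ne_iff.1 hne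
    refine Set.disjoint_left.2 fun y hya hyb => ?_
    have h1 := hya i (Set.mem_univ i)
    have h2 := hyb i (Set.mem_univ i)
    simp only [Set.mem_Ico] at h1 h2
    apply hi
    have e1 : ((a : Fin 3 → ℤ) i : ℝ) < ((b : Fin 3 → ℤ) i : ℝ) + 1 :=
      lt_of_le_of_lt h1.1 h2.2
    have e2 : ((b : Fin 3 → ℤ) i : ℝ) < ((a : Fin 3 → ℤ) i : ℝ) + 1 :=
      lt_of_le_of_lt h2.1 h1.2
    have e1' : (a : Fin 3 → ℤ) i < (b : Fin 3 → ℤ) i + 1 := by exact_mod_cast e1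
    have e2' : (b : Fin 3 → ℤ) i < (a : Fin 3 → ℤ) i + 1 := by exact_mod_cast e2
    omega
  have hsub : (⋃ x : A, cube x) ⊆ B := by
    rintro y ⟨_, ⟨x, rfl⟩, hy⟩
    obtain ⟨hxpos, hxsum⟩ := x.2
    have hyx : ∀ i, ((x : Fin 3 → ℤ) i : ℝ) ≤ y i ∧ y i < ((x : Fin 3 → ℤ) i : ℝ) + 1 :=
      fun i => hy i (Set.mem_univ i)
    have hypos : ∀ i, μ i < y i := fun i => lt_of_lt_of_le (hxpos i) (hyx i).1
    refine ⟨hypos, ?_⟩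
    -- per-coordinate bound
    have hbound : ∀ i, (y i - μ i) ^ 3 ≤ (((x : Fin 3 → ℤ) i : ℝ) - μ i) ^ 3
        + 3 * R ^ 2 + 3 * R + 1 := by
      intro i
      have ha0 : (0:ℝ) < ((x : Fin 3 → ℤ) i : ℝ) - μ i := sub_pos.2 (hxpos i)
      have ha3 : (((x : Fin 3 → ℤ) i : ℝ) - μ i) ^ 3 < M :=
        lt_of_le_of_lt (Finset.single_le_sum
          (f := fun j => (((x : Fin 3 → ℤ) j : ℝ) - μ j) ^ 3)
          (fun j _ => (pow_pos (sub_pos.2 (hxpos j)) 3).le) (Finset.mem_univ i)) hxsum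
      have haR : ((x : Fin 3 → ℤ) i : ℝ) - μ i < R := by
        apply lt_of_pow_lt_pow_left₀ 3 hR0
        rw [hR3]; exact ha3
      have ha2 : (((x : Fin 3 → ℤ) i : ℝ) - μ i) ^ 2 ≤ R ^ 2 :=
        pow_le_pow_left₀ ha0.le haR.le 2
      have hb1 : y i - μ i ≤ (((x : Fin 3 → ℤ) i : ℝ) - μ i) + 1 := by
        have := (hyx i).2; linarith
      have hb0 : 0 ≤ y i - μ i := by linarith [hypos i]
      calc (y i - μ i) ^ 3 ≤ ((((x : Fin 3 → ℤ) i : ℝ) - μ i) + 1) ^ 3 :=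
            pow_le_pow_left₀ hb0 hb1 3
        _ = (((x : Fin 3 → ℤ) i : ℝ) - μ i) ^ 3 + 3 * (((x : Fin 3 → ℤ) i : ℝ) - μ i) ^ 2
            + 3 * (((x : Fin 3 → ℤ) i : ℝ) - μ i) + 1 := by ring
        _ ≤ (((x : Fin 3 → ℤ) i : ℝ) - μ i) ^ 3 + 3 * R ^ 2 + 3 * R + 1 := by linarith
    have h0 := hbound 0; have h1 := hbound 1; have h2 := hbound 2
    have hxsum' := hxsum
    rw [Fin.sum_univ_three] at hxsum' ⊢
    simp only [hM''def]
    linarith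
  have hcard : (∑' x : A, (1:ℝ≥0∞)) ≤ volume B := by
    calc (∑' x : A, (1:ℝ≥0∞)) = ∑' x : A, volume (cube x) := by
          exact tsum_congr fun x => (hcubevol x).symm
      _ = volume (⋃ x : A, cube x) := (measure_iUnion hdisj fun x => hcubemeas x).symm
      _ ≤ volume B := measure_mono hsub
  -- step 5 : volume B = M'' * V
  set r : ℝ := M'' ^ ((1:ℝ)/3) with hrdef
  have hr0 : 0 < r := Real.rpow_pos_of_pos hM''0 _
  have hr3 : r ^ 3 = M'' := by
    rw [hrdef, ← Real.rpow_natCast (M'' ^ ((1:ℝ)/3)) 3, ← Real.rpow_mul hM''0.le]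
    norm_num
  have hBeq : B = μ +ᵥ (r • S) := by
    ext y
    rw [Set.mem_vadd_set_iff_neg_vadd_mem,
      Set.mem_smul_set_iff_inv_smul_mem₀ (ne_of_gt hr0)]
    simp only [hBdef, hSdef, Set.mem_setOf_eq, Pi.smul_apply, smul_eq_mul,
      vadd_eq_add, Pi.add_apply, Pi.neg_apply]
    have hrinv : 0 < r⁻¹ := inv_pos.2 hr0
    constructor
    · rintro ⟨hy1, hy2⟩
      constructor
      · intro i
        have : 0 < y i - μ i := by linarith [hy1 i]
        have : 0 < r⁻¹ * (-μ i + y i) := by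
          apply mul_pos hrinv; linarith
        exact this
      · have hexp : ∀ i, (r⁻¹ * (-μ i + y i)) ^ 3 = (y i - μ i) ^ 3 / M'' := by
          intro i
          rw [mul_pow, ← hr3]
          field_simp
          ring
        calc (∑ i, (r⁻¹ * (-μ i + y i)) ^ 3) = (∑ i, (y i - μ i) ^ 3) / M'' := by
              rw [Finset.sum_div]; exact Finset.sum_congr rfl fun i _ => hexp i
          _ < 1 := (div_lt_one hM''0).2 hy2
    · rintro ⟨hy1, hy2⟩
      constructor
      · intro i
        have := hy1 i
        have h := mul_pos hr0 this
        rw [mul_comm] at h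
        have : 0 < -μ i + y i := by
          by_contra hle
          push_neg at hle
          have : r⁻¹ * (-μ i + y i) ≤ 0 :=
            mul_nonpos_of_nonneg_of_nonpos hrinv.le hle
          linarith [hy1 i]
        linarith
      · have hexp : ∀ i, (r⁻¹ * (-μ i + y i)) ^ 3 = (y i - μ i) ^ 3 / M'' := by
          intro i
          rw [mul_pow, ← hr3]
          field_simp
          ring
        have : (∑ i, (y i - μ i) ^ 3) / M'' < 1 := by
          calc (∑ i, (y i - μ i) ^ 3) / M''
              = ∑ i, (r⁻¹ * (-μ i + y i)) ^ 3 := by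
                rw [Finset.sum_div]; exact (Finset.sum_congr rfl fun i _ => (hexp i)).symm
            _ < 1 := hy2
        exact (div_lt_one hM''0).1 this
  have hvolB : volume B = ENNReal.ofReal M'' * V := by
    rw [hBeq, measure_vadd, Measure.addHaar_smul_of_nonneg volume hr0.le S]
    congr 2
    rw [Module.finrank_fintype_fun_eq_card, Fintype.card_fin, hr3]
  -- assemble
  calc (∫⁻ τ in Set.Icc (0 : ℝ) N,
        (Nat.card {x : Fin 3 → ℤ // (∀ i, μ i < (x i : ℝ)) ∧
          |(∑ i, ((x i : ℝ) - μ i) ^ 3) - τ| < η} : ℝ≥0∞))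
      ≤ ENNReal.ofReal (2*η) * ∑' x : A, (1:ℝ≥0∞) := step1
    _ ≤ ENNReal.ofReal (2*η) * volume B := mul_le_mul_right hcard _
    _ = ENNReal.ofReal (2*η) * (ENNReal.ofReal M'' * V) := by rw [hvolB]
    _ = ENNReal.ofReal (2*η*M'') * V := by
        rw [← mul_assoc, ← ENNReal.ofReal_mul (by positivity : (0:ℝ) ≤ 2*η)]
    _ ≤ ENNReal.ofReal (2 * η * (N + 10 * N ^ ((2:ℝ)/3))) * V := by
        apply mul_le_mul_left
        apply ENNReal.ofReal_le_ofReal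
        have h2η : 0 ≤ 2 * η := by positivity
        calc 2*η*M'' ≤ 2*η*(N + 10 * N ^ ((2:ℝ)/3)) :=
          mul_le_mul_of_nonneg_left hfinal h2η
end

section
/- Let h₁, …, h₉ ∈ ℝ[x] be cubic polynomials with leading coefficients a₁, …, a₉ satisfying a₁ > 0, aᵢ < 0 for 2 ≤ i ≤ 9, and a₁ ≤ |a₂|. Define the real number c by c³ = −8 a₁⁻¹ (a₂ + ⋯ + a₇), and put H(x₁, …, x₉) = h₁(x₁) + ⋯ + h₉(x₉). Then there exists ω₀ > 0 such that for every ω ∈ (0, ω₀] there exist κ > 0 and P₀ with the following property: for every real P ≥ P₀ and all real numbers x₂, …, x₉ with xᵢ ∈ [(1 + 2ω)P, (1 + 3ω)P] for 2 ≤ i ≤ 7 and xᵢ ∈ [P^{4/5}, 2P^{4/5}] for i = 8, 9, the Lebesgue measure of the set { x₁ ∈ [P, cP] : |H(x₁, …, x₉)| ≤ 1/2 } is at least κ P^{−2}. -/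
/-!
Write `f = h₁` and `S = h₂(x₂) + ⋯ + h₉(x₉)`, and let `A = a₂ + ⋯ + a₇ ≤ -a₁`. Every `hᵢ(y)` is
`aᵢy³ + O(y²)` for `y ≥ 1`, and all `xᵢ` lie in `[1, 2P]`, so uniformly in `x`
`f(P) + S ≤ (a₁ + A(1+2ω)³)P³ + O(P^{12/5}) ≤ -a₁((1+2ω)³ - 1)P³ + O(P^{12/5})` and, since
`a₁c³ = -8A`, `f(cP) + S ≥ -A(8 - (1+3ω)³)P³ - O(P^{12/5})`; the `O(P^{12/5})` comes from
`x₈³, x₉³`. Hence for large `P` the function `f + S` goes from `≤ -1/2` to `≥ 1/2` on `[P, cP]`.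
Since `f` is `O(P²)`-Lipschitz there, `|f + S| ≤ 1/2` on an interval of length `≫ P⁻²` around a
zero of `f + S`.
-/

open MeasureTheory Filter Finset Polynomial Asymptotics

namespace Polynomial

theorem abs_eval_le_sum_abs_coeff_mul_pow {q : ℝ[X]} {m : ℕ} (hq : q.natDegree ≤ m) {y : ℝ}
    (hy : 1 ≤ y) : |q.eval y| ≤ (∑ i ∈ range (m + 1), |q.coeff i|) * y ^ m := by
  rw [eval_eq_sum_range' (Nat.lt_succ_of_le hq), Finset.sum_mul]
  refine (abs_sum_le_sum_abs _ _).trans (Finset.sum_le_sum fun i hi => ?_)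
  rw [abs_mul, abs_of_nonneg (pow_nonneg (zero_le_one.trans hy) i)]
  exact mul_le_mul_of_nonneg_left (pow_le_pow_right₀ hy (Nat.lt_succ_iff.1 (mem_range.1 hi)))
    (abs_nonneg _)

theorem exists_abs_eval_sub_leadingCoeff_mul_pow_le (p : ℝ[X]) :
    ∃ K, 0 ≤ K ∧ ∀ y, 1 ≤ y →
      |p.eval y - p.leadingCoeff * y ^ p.natDegree| ≤ K * y ^ (p.natDegree - 1) := by
  refine ⟨∑ i ∈ range (p.natDegree - 1 + 1), |p.eraseLead.coeff i|,
    sum_nonneg fun i _ => abs_nonneg _, fun y hy => ?_⟩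
  have hlead : p.eval y - p.leadingCoeff * y ^ p.natDegree = p.eraseLead.eval y := by
    have := congrArg (eval y) (eraseLead_add_C_mul_X_pow p)
    rw [eval_add, eval_mul_X_pow, eval_C] at this
    linarith
  rw [hlead]
  exact abs_eval_le_sum_abs_coeff_mul_pow (eraseLead_natDegree_le p) hy

theorem exists_forall_abs_eval_sub_leadingCoeff_mul_pow_le {ι : Type*} [Fintype ι]
    (h : ι → ℝ[X]) {n : ℕ} (hn : ∀ i, (h i).natDegree = n) :
    ∃ K, 0 ≤ K ∧ ∀ i y, 1 ≤ y →
      |(h i).eval y - (h i).leadingCoeff * y ^ n| ≤ K * y ^ (n - 1) := by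
  choose K hK0 hK using fun i => (h i).exists_abs_eval_sub_leadingCoeff_mul_pow_le
  refine ⟨∑ i, K i, sum_nonneg fun i _ => hK0 i, fun i y hy => ?_⟩
  rw [← hn i]
  exact (hK i y hy).trans (mul_le_mul_of_nonneg_right
    (single_le_sum (fun j _ => hK0 j) (mem_univ i)) (pow_nonneg (by linarith) _))

theorem exists_abs_eval_sub_eval_le (p : ℝ[X]) :
    ∃ C, 0 < C ∧ ∀ R s t, s ∈ Set.Icc 1 R → t ∈ Set.Icc 1 R →
      |p.eval s - p.eval t| ≤ C * R ^ (p.natDegree - 1) * |s - t| := by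
  set S := ∑ i ∈ range (p.natDegree - 1 + 1), |p.derivative.coeff i|
  have hS : 0 ≤ S := sum_nonneg fun i _ => abs_nonneg _
  refine ⟨S + 1, by linarith, fun R s t hs ht => ?_⟩
  have hderiv : ∀ y ∈ Set.Icc 1 R,
      ‖deriv (fun y => p.eval y) y‖ ≤ (S + 1) * R ^ (p.natDegree - 1) := by
    intro y hy
    rw [Polynomial.deriv, Real.norm_eq_abs]
    calc |p.derivative.eval y| ≤ S * y ^ (p.natDegree - 1) :=
          abs_eval_le_sum_abs_coeff_mul_pow (natDegree_derivative_le p) hy.1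
      _ ≤ (S + 1) * R ^ (p.natDegree - 1) := by
          have hy0 : 0 ≤ y := zero_le_one.trans hy.1
          gcongr
          · linarith
          · exact hy.2
  simpa only [Real.norm_eq_abs] using (convex_Icc 1 R).norm_image_sub_le_of_norm_deriv_le
    (fun y _ => p.differentiableAt) hderiv ht hs

end Polynomial

theorem ofReal_le_volume_abs_le_of_lipschitz {g : ℝ → ℝ} {u v r M : ℝ} (huv : u ≤ v)
    (hr : 0 ≤ r) (hM : 0 < M) (hg : ContinuousOn g (Set.Icc u v))
    (hlip : ∀ s ∈ Set.Icc u v, ∀ t ∈ Set.Icc u v, |g s - g t| ≤ M * |s - t|)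
    (hu : g u ≤ -r) (hv : r ≤ g v) :
    ENNReal.ofReal (2 * r / M) ≤ volume {t ∈ Set.Icc u v | |g t| ≤ r} := by
  obtain ⟨t₀, ht₀, hzero⟩ := intermediate_value_Icc huv hg
    (show (0 : ℝ) ∈ Set.Icc (g u) (g v) from ⟨by linarith, by linarith⟩)
  have hlow : u ≤ t₀ - r / M := by
    have := hlip t₀ ht₀ u (Set.left_mem_Icc.2 huv)
    rw [hzero, abs_of_nonneg (sub_nonneg.2 ht₀.1), zero_sub, abs_neg,
      abs_of_nonpos (by linarith)] at this
    rw [le_sub_comm, div_le_iff₀ hM]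
    linarith
  have hhigh : t₀ + r / M ≤ v := by
    have := hlip v (Set.right_mem_Icc.2 huv) t₀ ht₀
    rw [hzero, abs_of_nonneg (sub_nonneg.2 ht₀.2), sub_zero, abs_of_nonneg (by linarith)] at this
    rw [← le_sub_iff_add_le', div_le_iff₀ hM]
    linarith
  have hsub : Set.Icc (t₀ - r / M) (t₀ + r / M) ⊆ {t ∈ Set.Icc u v | |g t| ≤ r} := by
    intro t ht
    have htuv : t ∈ Set.Icc u v := ⟨hlow.trans ht.1, ht.2.trans hhigh⟩
    refine ⟨htuv, ?_⟩
    have hdist : M * |t - t₀| ≤ r := by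
      rw [← le_div_iff₀' hM, abs_le]
      constructor <;> linarith [ht.1, ht.2]
    simpa [hzero] using (hlip t htuv t₀ ht₀).trans hdist
  calc ENNReal.ofReal (2 * r / M) = volume (Set.Icc (t₀ - r / M) (t₀ + r / M)) := by
        rw [Real.volume_Icc]; ring_nf
    _ ≤ _ := measure_mono hsub

theorem isLittleO_rpow_rpow_atTop {e d : ℝ} (hed : e < d) :
    (fun x : ℝ => x ^ e) =o[atTop] fun x => x ^ d := by
  refine (isLittleO_iff_tendsto' ?_).2 ?_
  · filter_upwards [eventually_gt_atTop 0] with x hx h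
    exact absurd h (Real.rpow_pos_of_pos hx d).ne'
  · refine (tendsto_rpow_neg_atTop (sub_pos.2 hed)).congr' ?_
    filter_upwards [eventually_gt_atTop 0] with x hx
    rw [← Real.rpow_sub hx, neg_sub]

theorem eventually_mul_rpow_add_le_mul_rpow {e d α : ℝ} (hed : e < d) (hd : 0 < d) (hα : 0 < α)
    (β γ : ℝ) : ∀ᶠ x in atTop, β * x ^ e + γ ≤ α * x ^ d := by
  have hγ : (fun _ : ℝ => γ) =o[atTop] fun x => x ^ d :=
    isLittleO_const_left.2 <| Or.inr <| tendsto_norm_atTop_atTop.comp (tendsto_rpow_atTop hd)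
  filter_upwards [(((isLittleO_rpow_rpow_atTop hed).const_mul_left β).add hγ).def hα,
    eventually_ge_atTop 0] with x hx hx0
  rw [Real.norm_eq_abs, Real.norm_eq_abs, abs_of_nonneg (Real.rpow_nonneg hx0 d)] at hx
  exact (le_abs_self _).trans hx

theorem sum_bounds_of_abs_sub_mul_pow_le {ι : Type*} {s : Finset ι} {v a x : ι → ℝ} {n : ℕ}
    {E lo hi : ℝ} (hn : Odd n) (ha : ∀ i ∈ s, a i ≤ 0) (hx : ∀ i ∈ s, x i ∈ Set.Icc lo hi)
    (hv : ∀ i ∈ s, |v i - a i * x i ^ n| ≤ E) :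
    (∑ i ∈ s, a i) * hi ^ n - #s * E ≤ ∑ i ∈ s, v i ∧
      ∑ i ∈ s, v i ≤ (∑ i ∈ s, a i) * lo ^ n + #s * E := by
  have hpow : ∀ i ∈ s, a i * hi ^ n ≤ a i * x i ^ n ∧ a i * x i ^ n ≤ a i * lo ^ n :=
    fun i hi => ⟨mul_le_mul_of_nonpos_left (hn.pow_le_pow.2 (hx i hi).2) (ha i hi),
      mul_le_mul_of_nonpos_left (hn.pow_le_pow.2 (hx i hi).1) (ha i hi)⟩
  rw [sum_mul, sum_mul, ← nsmul_eq_mul, ← sum_const, ← sum_sub_distrib, ← sum_add_distrib]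
  constructor <;> refine sum_le_sum fun i hi => ?_ <;>
    linarith [abs_le.1 (hv i hi), hpow i hi]

theorem exists_sum_eval_bounds {h : Fin 9 → ℝ[X]} {K ω : ℝ} (hK0 : 0 ≤ K)
    (hK : ∀ i y, 1 ≤ y → |(h i).eval y - (h i).leadingCoeff * y ^ 3| ≤ K * y ^ 2)
    (hneg : ∀ i : Fin 9, i ≠ 0 → (h i).leadingCoeff < 0) (hω : 0 ≤ ω) (hω' : ω ≤ 1 / 3) :
    ∃ E, ∀ P, 1 ≤ P → ∀ x : Fin 9 → ℝ,
      (∀ i : Fin 9, 1 ≤ (i : ℕ) → (i : ℕ) ≤ 6 →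
        x i ∈ Set.Icc ((1 + 2 * ω) * P) ((1 + 3 * ω) * P)) →
      (∀ i : Fin 9, 7 ≤ (i : ℕ) → x i ∈ Set.Icc (P ^ ((4:ℝ)/5)) (2 * P ^ ((4:ℝ)/5))) →
      (∑ i ∈ Icc 1 6, (h i).leadingCoeff) * ((1 + 3 * ω) * P) ^ 3 - E * P ^ ((12:ℝ)/5) ≤
          ∑ i ∈ univ.erase 0, (h i).eval (x i) ∧
        ∑ i ∈ univ.erase 0, (h i).eval (x i) ≤
          (∑ i ∈ Icc 1 6, (h i).leadingCoeff) * ((1 + 2 * ω) * P) ^ 3 + E * P ^ ((12:ℝ)/5) := by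
  set T := ∑ i ∈ Ici 7, (h i).leadingCoeff
  have hT : T ≤ 0 := sum_nonpos fun i hi => (hneg i (by rintro rfl; simp at hi)).le
  refine ⟨32 * K - 8 * T, fun P hP x hmid htail => ?_⟩
  have hP0 : 0 ≤ P := zero_le_one.trans hP
  have hP45 : 1 ≤ P ^ ((4:ℝ)/5) ∧ P ^ ((4:ℝ)/5) ≤ P :=
    ⟨Real.one_le_rpow hP (by norm_num), Real.rpow_le_self_of_one_le hP (by norm_num)⟩
  have hP2 : P ^ 2 ≤ P ^ ((12:ℝ)/5) := by
    rw [← Real.rpow_natCast]; exact Real.rpow_le_rpow_of_exponent_le hP (by norm_num)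
  have hcube : (2 * P ^ ((4:ℝ)/5)) ^ 3 = 8 * P ^ ((12:ℝ)/5) := by
    rw [mul_pow, ← Real.rpow_natCast (P ^ _) 3, ← Real.rpow_mul hP0]; norm_num
  have herr : ∀ i y, y ∈ Set.Icc 1 (2 * P) →
      |(h i).eval y - (h i).leadingCoeff * y ^ 3| ≤ 4 * K * P ^ 2 := fun i y hy =>
    (hK i y hy.1).trans <| by nlinarith [pow_le_pow_left₀ (zero_le_one.trans hy.1) hy.2 2]
  have hmid' : ∀ i ∈ Icc (1 : Fin 9) 6, x i ∈ Set.Icc ((1 + 2 * ω) * P) ((1 + 3 * ω) * P) :=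
    fun i hi => by simp only [mem_Icc, Fin.le_def] at hi; exact hmid i hi.1 hi.2
  have htail' : ∀ i ∈ Ici (7 : Fin 9), x i ∈ Set.Icc (P ^ ((4:ℝ)/5)) (2 * P ^ ((4:ℝ)/5)) :=
    fun i hi => by simp only [mem_Ici, Fin.le_def] at hi; exact htail i hi
  have hnonpos : ∀ s : Finset (Fin 9), 0 ∉ s → ∀ i ∈ s, (h i).leadingCoeff ≤ 0 :=
    fun s hs i hi => (hneg i (by rintro rfl; exact hs hi)).le
  obtain ⟨hmid_lo, hmid_hi⟩ := sum_bounds_of_abs_sub_mul_pow_le (n := 3) (by decide)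
    (hnonpos _ (by decide)) hmid' fun i hi => herr i (x i)
      ⟨by nlinarith [(hmid' i hi).1], by nlinarith [(hmid' i hi).2]⟩
  obtain ⟨htail_lo, htail_hi⟩ := sum_bounds_of_abs_sub_mul_pow_le (n := 3) (by decide)
    (hnonpos _ (by decide)) htail' fun i hi => herr i (x i)
      ⟨hP45.1.trans (htail' i hi).1, (htail' i hi).2.trans (by linarith)⟩
  have hsplit : univ.erase (0 : Fin 9) = Icc 1 6 ∪ Ici 7 := by decide
  rw [hsplit, sum_union (by decide)]
  have hcard_mid : #(Icc (1 : Fin 9) 6) = 6 := by decide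
  have hcard_tail : #(Ici (7 : Fin 9)) = 2 := by decide
  rw [hcard_mid] at hmid_lo hmid_hi
  rw [hcard_tail, hcube] at htail_lo
  rw [hcard_tail] at htail_hi
  have hKP := mul_le_mul_of_nonneg_left hP2 hK0
  have hTP : T * (P ^ ((4:ℝ)/5)) ^ 3 ≤ 0 := mul_nonpos_of_nonpos_of_nonneg hT (by positivity)
  have hTP' : T * P ^ ((12:ℝ)/5) ≤ 0 := mul_nonpos_of_nonpos_of_nonneg hT (by positivity)
  push_cast at hmid_lo hmid_hi htail_lo htail_hi
  constructor <;> linarith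

theorem eventually_eval_add_sum_eval_sign_change {h : Fin 9 → ℝ[X]} {c ω : ℝ}
    (hnat : ∀ i, (h i).natDegree = 3) (hpos : 0 < (h 0).leadingCoeff)
    (hneg : ∀ i : Fin 9, i ≠ 0 → (h i).leadingCoeff < 0)
    (hA : ∑ i ∈ Icc 1 6, (h i).leadingCoeff ≤ -(h 0).leadingCoeff)
    (hc : (h 0).leadingCoeff * c ^ 3 = -8 * ∑ i ∈ Icc 1 6, (h i).leadingCoeff) (hc1 : 1 ≤ c)
    (hω : 0 < ω) (hω' : ω ≤ 1 / 6) :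
    ∀ᶠ P in atTop, ∀ x : Fin 9 → ℝ,
      (∀ i : Fin 9, 1 ≤ (i : ℕ) → (i : ℕ) ≤ 6 →
        x i ∈ Set.Icc ((1 + 2 * ω) * P) ((1 + 3 * ω) * P)) →
      (∀ i : Fin 9, 7 ≤ (i : ℕ) → x i ∈ Set.Icc (P ^ ((4:ℝ)/5)) (2 * P ^ ((4:ℝ)/5))) →
      (h 0).eval P + ∑ i ∈ univ.erase 0, (h i).eval (x i) ≤ -(1 / 2) ∧
        1 / 2 ≤ (h 0).eval (c * P) + ∑ i ∈ univ.erase 0, (h i).eval (x i) := by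
  obtain ⟨K, hK0, hK⟩ := exists_forall_abs_eval_sub_leadingCoeff_mul_pow_le h hnat
  replace hK : ∀ i y, 1 ≤ y → |(h i).eval y - (h i).leadingCoeff * y ^ 3| ≤ K * y ^ 2 := hK
  obtain ⟨E, hE⟩ := exists_sum_eval_bounds hK0 hK hneg hω.le (by linarith)
  have hα₁ : 0 < (h 0).leadingCoeff * ((1 + 2 * ω) ^ 3 - 1) :=
    mul_pos hpos (sub_pos.2 (one_lt_pow₀ (by linarith) three_ne_zero))
  have hα₂ : 0 < -(∑ i ∈ Icc 1 6, (h i).leadingCoeff) * (8 - (1 + 3 * ω) ^ 3) := by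
    have : (1 + 3 * ω) ^ 3 < 2 ^ 3 := pow_lt_pow_left₀ (by linarith) (by linarith) three_ne_zero
    exact mul_pos (by linarith) (by linarith)
  have hexp : (12:ℝ) / 5 < 3 := by norm_num
  filter_upwards [eventually_ge_atTop 1,
    eventually_mul_rpow_add_le_mul_rpow hexp three_pos hα₁ (K + E) (1 / 2),
    eventually_mul_rpow_add_le_mul_rpow hexp three_pos hα₂ (K * c ^ 2 + E) (1 / 2)]
    with P hP hlow hhigh x hmid htail
  obtain ⟨hS_lo, hS_hi⟩ := hE P hP x hmid htail
  have hP3 : P ^ (3:ℝ) = P ^ 3 := by exact_mod_cast Real.rpow_natCast P 3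
  rw [hP3] at hlow hhigh
  have hP2 : P ^ 2 ≤ P ^ ((12:ℝ)/5) := by
    rw [← Real.rpow_natCast]; exact Real.rpow_le_rpow_of_exponent_le hP (by norm_num)
  have hf_P := (abs_le.1 (hK 0 P hP)).2
  have hf_cP := (abs_le.1 (hK 0 (c * P) (one_le_mul_of_one_le_of_one_le hc1 hP))).1
  constructor
  · have := mul_le_mul_of_nonneg_right hA (by positivity : 0 ≤ ((1 + 2 * ω) * P) ^ 3)
    linarith [mul_le_mul_of_nonneg_left hP2 hK0]
  · have := congrArg (· * P ^ 3) hc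
    linarith [mul_le_mul_of_nonneg_left hP2 (by positivity : 0 ≤ K * c ^ 2)]

/-- **Uniform major-arc measure bound (7.6).**
Let `h₁, …, h₉` be cubic polynomials with leading coefficients
`a₁ > 0 > a₂, …, a₉` and `a₁ ≤ |a₂|`, let `c` satisfy
`c³ = -8 a₁⁻¹ (a₂ + ⋯ + a₇)`, and put `H(x) = ∑ᵢ hᵢ(xᵢ)`. Then for all
sufficiently small `ω > 0` there are `κ > 0` and `P₀` such that for all
`P ≥ P₀` and all `x₂, …, x₉` with `xᵢ ∈ [(1+2ω)P, (1+3ω)P]` (`2 ≤ i ≤ 7`)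
and `xᵢ ∈ [P^{4/5}, 2P^{4/5}]` (`i = 8, 9`), the measure of
`{x₁ ∈ [P, cP] : |H(x)| ≤ 1/2}` is at least `κ P⁻²`. -/
theorem uniform_major_arc_measure_bound
    (h : Fin 9 → Polynomial ℝ) (hdeg : ∀ i, (h i).degree = 3)
    (ha1 : 0 < (h 0).leadingCoeff)
    (hai : ∀ i : Fin 9, i ≠ 0 → (h i).leadingCoeff < 0)
    (ha12 : (h 0).leadingCoeff ≤ |(h 1).leadingCoeff|)
    (c : ℝ)
    (hc : c ^ 3 = -8 * ((h 0).leadingCoeff)⁻¹ *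
      ((h 1).leadingCoeff + (h 2).leadingCoeff + (h 3).leadingCoeff +
        (h 4).leadingCoeff + (h 5).leadingCoeff + (h 6).leadingCoeff)) :
    ∃ ω₀ : ℝ, 0 < ω₀ ∧ ∀ ω : ℝ, 0 < ω → ω ≤ ω₀ →
      ∃ κ : ℝ, 0 < κ ∧ ∃ P₀ : ℝ, ∀ P : ℝ, P₀ ≤ P →
        ∀ x : Fin 9 → ℝ,
          (∀ i : Fin 9, 1 ≤ (i : ℕ) → (i : ℕ) ≤ 6 →
            x i ∈ Set.Icc ((1 + 2 * ω) * P) ((1 + 3 * ω) * P)) →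
          (∀ i : Fin 9, 7 ≤ (i : ℕ) →
            x i ∈ Set.Icc (P ^ ((4:ℝ)/5)) (2 * P ^ ((4:ℝ)/5))) →
          ENNReal.ofReal (κ * P ^ (-(2:ℝ))) ≤
            volume {t ∈ Set.Icc P (c * P) |
              |(h 0).eval t + ∑ i ∈ Finset.univ.erase (0 : Fin 9),
                (h i).eval (x i)| ≤ 1/2} := by
  have hnat : ∀ i, (h i).natDegree = 3 := fun i => natDegree_eq_of_degree_eq_some (hdeg i)
  have hA_eq : ∑ i ∈ Icc (1 : Fin 9) 6, (h i).leadingCoeff = (h 1).leadingCoeff +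
      (h 2).leadingCoeff + (h 3).leadingCoeff + (h 4).leadingCoeff + (h 5).leadingCoeff +
      (h 6).leadingCoeff := by
    rw [show Icc (1 : Fin 9) 6 = {1, 2, 3, 4, 5, 6} by decide]
    simp [add_assoc]
  have hA : ∑ i ∈ Icc 1 6, (h i).leadingCoeff ≤ -(h 0).leadingCoeff := by
    rw [hA_eq]
    rw [abs_of_neg (hai 1 (by decide))] at ha12
    linarith [hai 2 (by decide), hai 3 (by decide), hai 4 (by decide), hai 5 (by decide),
      hai 6 (by decide)]
  have hc' : (h 0).leadingCoeff * c ^ 3 = -8 * ∑ i ∈ Icc 1 6, (h i).leadingCoeff := by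
    rw [hc, hA_eq]; field_simp
  have hc2 : 2 ≤ c := (Odd.pow_le_pow (n := 3) (by decide)).1 <|
    le_of_mul_le_mul_left (by linarith) ha1
  obtain ⟨C, hC, hlip⟩ := (h 0).exists_abs_eval_sub_eval_le
  refine ⟨1 / 6, by norm_num, fun ω hω hω₀ => ⟨(C * c ^ 2)⁻¹, by positivity, ?_⟩⟩
  obtain ⟨P₀, hP₀⟩ := eventually_atTop.1 ((eventually_eval_add_sum_eval_sign_change hnat ha1 hai
    hA hc' (by linarith) hω hω₀).and (eventually_ge_atTop 1))
  refine ⟨P₀, fun P hP x hmid htail => ?_⟩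
  obtain ⟨hsign, hP1⟩ := hP₀ P hP
  obtain ⟨hlow, hhigh⟩ := hsign x hmid htail
  have hPc : P ≤ c * P := le_mul_of_one_le_left (by linarith) (by linarith)
  have hκ : (C * c ^ 2)⁻¹ * P ^ (-(2:ℝ)) = 2 * (1 / 2) / (C * (c * P) ^ 2) := by
    rw [Real.rpow_neg (by linarith), Real.rpow_two]; field_simp
  rw [hκ]
  refine ofReal_le_volume_abs_le_of_lipschitz hPc (by norm_num) (by positivity) (by fun_prop)
    (fun s hs t ht => ?_) hlow hhigh
  rw [add_sub_add_right_eq_sub]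
  simpa only [hnat 0] using hlip _ s t ⟨hP1.trans hs.1, hs.2⟩ ⟨hP1.trans ht.1, ht.2⟩
end
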